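/- arXiv:1701.04151 — 7 statements merged into one kernel-verified Lean document; each statement's English description precedes it below -/
import Mathlib

section
/- For every integer n ≥ 1 and every (y,z) ∈ ℝ × ℝ^d, the set { g(y,u) + (n+λ)·‖u − z‖^α : u ∈ ℝ^d } is bounded below, and the infimum satisfies g_n(y,z) ≥ g(y,0) − λ·(f + |y| + ‖z‖^α); in particular g_n(y,z) is a (finite) real number. -/
open Filter Topology

lemma real_rpow_add_le_add_rpow {p : ℝ} (a b : ℝ) (ha : 0 ≤ a) (hb : 0 ≤ b)
    (hp : 0 ≤ p) (hp1 : p ≤ 1) : (a + b) ^ p ≤ a ^ p + b ^ p := by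
  have h := NNReal.rpow_add_le_add_rpow (a.toNNReal) (b.toNNReal) hp hp1
  have := NNReal.coe_le_coe.2 h
  push_cast [NNReal.coe_rpow] at this
  simpa [Real.coe_toNNReal a ha, Real.coe_toNNReal b hb] using this

/-- For every integer `n ≥ 1` and every `(y,z) ∈ ℝ × ℝ^d`, the set
`{ g(y,u) + (n+λ)·‖u − z‖^α : u ∈ ℝ^d }` is bounded below, and its infimum satisfies
`g_n(y,z) ≥ g(y,0) − λ·(f + |y| + ‖z‖^α)`. -/
theorem stmt_0 (d : ℕ) (hd : 1 ≤ d) (lam α f : ℝ) (hlam : 0 < lam)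
    (hα : 0 < α ∧ α < 1) (hf : 0 ≤ f)
    (g : ℝ → EuclideanSpace ℝ (Fin d) → ℝ)
    (H4 : ∀ (y : ℝ) (z : EuclideanSpace ℝ (Fin d)),
      |g y z - g y 0| ≤ lam * (f + |y| + ‖z‖ ^ α))
    (n : ℕ) (hn : 1 ≤ n) (y : ℝ) (z : EuclideanSpace ℝ (Fin d)) :
    BddBelow (Set.range fun u : EuclideanSpace ℝ (Fin d) =>
        g y u + ((n : ℝ) + lam) * ‖u - z‖ ^ α) ∧
    g y 0 - lam * (f + |y| + ‖z‖ ^ α) ≤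
      ⨅ u : EuclideanSpace ℝ (Fin d), (g y u + ((n : ℝ) + lam) * ‖u - z‖ ^ α) := by
  have key : ∀ u : EuclideanSpace ℝ (Fin d),
      g y 0 - lam * (f + |y| + ‖z‖ ^ α) ≤ g y u + ((n : ℝ) + lam) * ‖u - z‖ ^ α := by
    intro u
    have h1 := (abs_le.1 (H4 y u)).1
    have hsub : ‖u‖ ^ α ≤ ‖u - z‖ ^ α + ‖z‖ ^ α := by
      calc ‖u‖ ^ α ≤ (‖u - z‖ + ‖z‖) ^ α := by
            apply Real.rpow_le_rpow (norm_nonneg _) _ hα.1.le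
            simpa using norm_add_le (u - z) z
          _ ≤ ‖u - z‖ ^ α + ‖z‖ ^ α :=
            real_rpow_add_le_add_rpow _ _ (norm_nonneg _) (norm_nonneg _) hα.1.le hα.2.le
    have hn0 : (1 : ℝ) ≤ (n : ℝ) := by exact_mod_cast hn
    have hnz : 0 ≤ ‖u - z‖ ^ α := Real.rpow_nonneg (norm_nonneg _) α
    nlinarith [mul_le_mul_of_nonneg_left hsub hlam.le]
  constructor
  · refine ⟨g y 0 - lam * (f + |y| + ‖z‖ ^ α), ?_⟩
    rintro x ⟨u, rfl⟩
    exact key u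
  · exact le_ciInf key
end

section
/- For every integer n ≥ 1 and every (y,z) ∈ ℝ × ℝ^d one has g_n(y,z) ≤ g_{n+1}(y,z) ≤ g(y,z) and |g_n(y,z) − g(y,0)| ≤ λ·(f + |y| + ‖z‖^α). -/
open Filter Topology

/-- The inf-convolution `g_n(y,z) := inf_{u ∈ ℝ^d} ( g(y,u) + (n+λ)·‖u − z‖^α )`. -/
noncomputable def gseq (d : ℕ) (lam α : ℝ) (g : ℝ → EuclideanSpace ℝ (Fin d) → ℝ)
    (n : ℕ) (y : ℝ) (z : EuclideanSpace ℝ (Fin d)) : ℝ :=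
  ⨅ u : EuclideanSpace ℝ (Fin d), (g y u + ((n : ℝ) + lam) * ‖u - z‖ ^ α)

/-! For `α ≤ 1` the map `x ↦ ‖x‖ ^ α` is again subadditive, so a lower bound of the form
`A - λ ‖u‖ ^ α` moves from the point `u` to the point `z` at the cost `λ ‖u - z‖ ^ α`, which the
penalty `(n + λ) ‖u - z‖ ^ α` of the inf-convolution pays for. This bounds every `g_n` below
by `g(y,0) - λ (f + |y| + ‖z‖ ^ α)`; choosing `u = z` bounds it above by `g(y,z)`, and a larger
penalty can only raise the infimum. -/

lemma rpow_norm_le_rpow_norm_sub_add {E : Type*} [SeminormedAddCommGroup E] {α : ℝ}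
    (hα0 : 0 ≤ α) (hα1 : α ≤ 1) (u z : E) : ‖u‖ ^ α ≤ ‖u - z‖ ^ α + ‖z‖ ^ α :=
  calc ‖u‖ ^ α ≤ (‖u - z‖ + ‖z‖) ^ α :=
        Real.rpow_le_rpow (norm_nonneg _) (norm_le_norm_sub_add u z) hα0
    _ ≤ ‖u - z‖ ^ α + ‖z‖ ^ α :=
        Real.rpow_add_le_add_rpow (norm_nonneg _) (norm_nonneg _) hα0 hα1

lemma sub_mul_rpow_norm_le_add_mul_rpow_norm_sub {E : Type*} [SeminormedAddCommGroup E]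
    {α lam c A : ℝ} (hα0 : 0 ≤ α) (hα1 : α ≤ 1) (hlam : 0 ≤ lam) (hc : lam ≤ c)
    {φ : E → ℝ} (hφ : ∀ u, A - lam * ‖u‖ ^ α ≤ φ u) (u z : E) :
    A - lam * ‖z‖ ^ α ≤ φ u + c * ‖u - z‖ ^ α := by
  have htri : lam * ‖u‖ ^ α ≤ lam * ‖u - z‖ ^ α + lam * ‖z‖ ^ α := by
    rw [← mul_add]
    exact mul_le_mul_of_nonneg_left (rpow_norm_le_rpow_norm_sub_add hα0 hα1 u z) hlam
  have hpen : lam * ‖u - z‖ ^ α ≤ c * ‖u - z‖ ^ α :=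
    mul_le_mul_of_nonneg_right hc (by positivity)
  linarith [hφ u]

section gseq

variable {d : ℕ} {lam α f : ℝ} {g : ℝ → EuclideanSpace ℝ (Fin d) → ℝ}

lemma sub_le_gseq_summand (hlam : 0 ≤ lam) (hα0 : 0 ≤ α) (hα1 : α ≤ 1)
    (H4 : ∀ y z, |g y z - g y 0| ≤ lam * (f + |y| + ‖z‖ ^ α)) (n : ℕ) (y : ℝ)
    (z u : EuclideanSpace ℝ (Fin d)) :
    g y 0 - lam * (f + |y| + ‖z‖ ^ α) ≤ g y u + ((n : ℝ) + lam) * ‖u - z‖ ^ α := by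
  have hg : ∀ u, (g y 0 - lam * (f + |y|)) - lam * ‖u‖ ^ α ≤ g y u := fun u => by
    linarith [(abs_le.mp (H4 y u)).1]
  have := sub_mul_rpow_norm_le_add_mul_rpow_norm_sub hα0 hα1 hlam
    (le_add_of_nonneg_left n.cast_nonneg) hg u z
  linarith

lemma bddBelow_range_gseq_summand (hlam : 0 ≤ lam) (hα0 : 0 ≤ α) (hα1 : α ≤ 1)
    (H4 : ∀ y z, |g y z - g y 0| ≤ lam * (f + |y| + ‖z‖ ^ α)) (n : ℕ) (y : ℝ)
    (z : EuclideanSpace ℝ (Fin d)) :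
    BddBelow (Set.range fun u => g y u + ((n : ℝ) + lam) * ‖u - z‖ ^ α) :=
  ⟨_, Set.forall_mem_range.mpr (sub_le_gseq_summand hlam hα0 hα1 H4 n y z)⟩

lemma sub_le_gseq (hlam : 0 ≤ lam) (hα0 : 0 ≤ α) (hα1 : α ≤ 1)
    (H4 : ∀ y z, |g y z - g y 0| ≤ lam * (f + |y| + ‖z‖ ^ α)) (n : ℕ) (y : ℝ)
    (z : EuclideanSpace ℝ (Fin d)) :
    g y 0 - lam * (f + |y| + ‖z‖ ^ α) ≤ gseq d lam α g n y z :=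
  le_ciInf (sub_le_gseq_summand hlam hα0 hα1 H4 n y z)

lemma gseq_le_self (hlam : 0 ≤ lam) (hα0 : 0 < α) (hα1 : α ≤ 1)
    (H4 : ∀ y z, |g y z - g y 0| ≤ lam * (f + |y| + ‖z‖ ^ α)) (n : ℕ) (y : ℝ)
    (z : EuclideanSpace ℝ (Fin d)) :
    gseq d lam α g n y z ≤ g y z := by
  have := ciInf_le (bddBelow_range_gseq_summand hlam hα0.le hα1 H4 n y z) z
  simpa [gseq, Real.zero_rpow hα0.ne'] using this

lemma gseq_mono (hlam : 0 ≤ lam) (hα0 : 0 ≤ α) (hα1 : α ≤ 1)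
    (H4 : ∀ y z, |g y z - g y 0| ≤ lam * (f + |y| + ‖z‖ ^ α)) {n m : ℕ} (hnm : n ≤ m)
    (y : ℝ) (z : EuclideanSpace ℝ (Fin d)) :
    gseq d lam α g n y z ≤ gseq d lam α g m y z := by
  refine ciInf_mono (bddBelow_range_gseq_summand hlam hα0 hα1 H4 n y z) fun u => ?_
  gcongr

end gseq

theorem stmt_1_general (d : ℕ) (lam α f : ℝ) (hlam : 0 < lam)
    (hα : 0 < α ∧ α < 1)
    (g : ℝ → EuclideanSpace ℝ (Fin d) → ℝ)
    (H4 : ∀ (y : ℝ) (z : EuclideanSpace ℝ (Fin d)),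
      |g y z - g y 0| ≤ lam * (f + |y| + ‖z‖ ^ α))
    (n : ℕ) (y : ℝ) (z : EuclideanSpace ℝ (Fin d)) :
    gseq d lam α g n y z ≤ gseq d lam α g (n + 1) y z ∧
    gseq d lam α g (n + 1) y z ≤ g y z ∧
    |gseq d lam α g n y z - g y 0| ≤ lam * (f + |y| + ‖z‖ ^ α) := by
  obtain ⟨hα0, hα1⟩ := hα
  refine ⟨gseq_mono hlam.le hα0.le hα1.le H4 n.le_succ y z,
    gseq_le_self hlam.le hα0 hα1.le H4 (n + 1) y z, abs_le.mpr ⟨?_, ?_⟩⟩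
  · linarith [sub_le_gseq hlam.le hα0.le hα1.le H4 n y z]
  · linarith [gseq_le_self hlam.le hα0 hα1.le H4 n y z, (abs_le.mp (H4 y z)).2]

/-- For every integer `n ≥ 1` and every `(y,z)`,
`g_n(y,z) ≤ g_{n+1}(y,z) ≤ g(y,z)` and `|g_n(y,z) − g(y,0)| ≤ λ·(f + |y| + ‖z‖^α)`. -/
theorem stmt_1 (d : ℕ) (hd : 1 ≤ d) (lam α f : ℝ) (hlam : 0 < lam)
    (hα : 0 < α ∧ α < 1) (hf : 0 ≤ f)
    (g : ℝ → EuclideanSpace ℝ (Fin d) → ℝ)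
    (H4 : ∀ (y : ℝ) (z : EuclideanSpace ℝ (Fin d)),
      |g y z - g y 0| ≤ lam * (f + |y| + ‖z‖ ^ α))
    (n : ℕ) (hn : 1 ≤ n) (y : ℝ) (z : EuclideanSpace ℝ (Fin d)) :
    gseq d lam α g n y z ≤ gseq d lam α g (n + 1) y z ∧
    gseq d lam α g (n + 1) y z ≤ g y z ∧
    |gseq d lam α g n y z - g y 0| ≤ lam * (f + |y| + ‖z‖ ^ α) :=
  stmt_1_general d lam α f hlam hα g H4 n y z
end

section
/- Assume in addition that y ↦ g(y,z) is continuous uniformly with respect to z, i.e. for every y₀ ∈ ℝ and ε > 0 there is δ > 0 such that |y − y₀| < δ implies |g(y,z) − g(y₀,z)| ≤ ε for every z ∈ ℝ^d. Then for every integer n ≥ 1 the function g_n is jointly continuous on ℝ × ℝ^d. -/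
open Filter Topology

lemma rpow_subadd {α : ℝ} (hα0 : 0 ≤ α) (hα1 : α ≤ 1) {x y : ℝ} (hx : 0 ≤ x) (hy : 0 ≤ y) :
    (x + y) ^ α ≤ x ^ α + y ^ α := by
  have := NNReal.rpow_add_le_add_rpow x.toNNReal y.toNNReal hα0 hα1
  have h := (NNReal.coe_le_coe).2 this
  simpa [NNReal.coe_rpow, NNReal.coe_add, Real.coe_toNNReal _ hx, Real.coe_toNNReal _ hy,
    Real.coe_toNNReal _ (add_nonneg hx hy)] using h

/-- `‖a‖^α ≤ ‖b‖^α + ‖a - b‖^α` for `0 ≤ α ≤ 1`. -/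
lemma norm_rpow_sub_le {d : ℕ} {α : ℝ} (hα0 : 0 ≤ α) (hα1 : α ≤ 1)
    (a b : EuclideanSpace ℝ (Fin d)) : ‖a‖ ^ α ≤ ‖b‖ ^ α + ‖a - b‖ ^ α := by
  calc ‖a‖ ^ α ≤ (‖b‖ + ‖a - b‖) ^ α := by
        apply Real.rpow_le_rpow (norm_nonneg _) _ hα0
        have := norm_add_le b (a - b)
        simpa using this
    _ ≤ ‖b‖ ^ α + ‖a - b‖ ^ α := rpow_subadd hα0 hα1 (norm_nonneg _) (norm_nonneg _)

/-- If `y ↦ g(y,z)` is continuous uniformly with respect to `z`, then for every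
integer `n ≥ 1` the function `g_n` is jointly continuous on `ℝ × ℝ^d`. -/
theorem stmt_4 (d : ℕ) (hd : 1 ≤ d) (lam α f : ℝ) (hlam : 0 < lam)
    (hα : 0 < α ∧ α < 1) (hf : 0 ≤ f)
    (g : ℝ → EuclideanSpace ℝ (Fin d) → ℝ)
    (H4 : ∀ (y : ℝ) (z : EuclideanSpace ℝ (Fin d)),
      |g y z - g y 0| ≤ lam * (f + |y| + ‖z‖ ^ α))
    (hy_unif : ∀ (y₀ : ℝ) (ε : ℝ), 0 < ε → ∃ δ > 0, ∀ y : ℝ, |y - y₀| < δ →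
      ∀ z : EuclideanSpace ℝ (Fin d), |g y z - g y₀ z| ≤ ε)
    (n : ℕ) (hn : 1 ≤ n) :
    Continuous (fun p : ℝ × EuclideanSpace ℝ (Fin d) => gseq d lam α g n p.1 p.2) := by
  obtain ⟨hα0, hα1⟩ := hα
  set c : ℝ := (n : ℝ) + lam with hc
  have hc_pos : 0 < c := by positivity
  have hcl : lam ≤ c := by
    have : (1 : ℝ) ≤ (n : ℝ) := by exact_mod_cast hn
    linarith
  -- boundedness below of the inf-convolution family
  have hbdd : ∀ (y : ℝ) (z : EuclideanSpace ℝ (Fin d)),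
      BddBelow (Set.range fun u : EuclideanSpace ℝ (Fin d) =>
        g y u + c * ‖u - z‖ ^ α) := by
    intro y z
    refine ⟨g y 0 - lam * (f + |y|) - c * ‖z‖ ^ α, ?_⟩
    rintro x ⟨u, rfl⟩
    dsimp only
    have h1 : g y 0 - lam * (f + |y| + ‖u‖ ^ α) ≤ g y u := by
      have := abs_le.1 (H4 y u); linarith [this.1]
    have h2 : ‖u‖ ^ α ≤ ‖z‖ ^ α + ‖u - z‖ ^ α := norm_rpow_sub_le hα0.le hα1.le u z
    have h3 : lam * ‖u‖ ^ α ≤ lam * (‖z‖ ^ α + ‖u - z‖ ^ α) :=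
      mul_le_mul_of_nonneg_left h2 hlam.le
    have h4 : lam * ‖u - z‖ ^ α ≤ c * ‖u - z‖ ^ α :=
      mul_le_mul_of_nonneg_right hcl (Real.rpow_nonneg (norm_nonneg _) _)
    have h5 : lam * ‖z‖ ^ α ≤ c * ‖z‖ ^ α :=
      mul_le_mul_of_nonneg_right hcl (Real.rpow_nonneg (norm_nonneg _) _)
    linarith
  -- key comparison estimate
  have key : ∀ (y y' : ℝ) (z z' : EuclideanSpace ℝ (Fin d)) (ε : ℝ),
      (∀ u, |g y u - g y' u| ≤ ε) →
      gseq d lam α g n y z ≤ gseq d lam α g n y' z' + ε + c * ‖z - z'‖ ^ α := by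
    intro y y' z z' ε hε
    rw [gseq, ← sub_le_iff_le_add, ← sub_le_iff_le_add]
    refine le_ciInf fun u => ?_
    rw [sub_le_iff_le_add, sub_le_iff_le_add]
    have step : gseq d lam α g n y z ≤ g y u + c * ‖u - z‖ ^ α := ciInf_le (hbdd y z) u
    have hgg : g y u ≤ g y' u + ε := by have := abs_le.1 (hε u); linarith [this.1]
    have hnorm : ‖u - z‖ ^ α ≤ ‖u - z'‖ ^ α + ‖z - z'‖ ^ α := by
      have h := norm_rpow_sub_le hα0.le hα1.le (u - z) (u - z')
      have : (u - z) - (u - z') = z' - z := by abel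
      rw [this, norm_sub_rev z' z] at h
      linarith
    have := mul_le_mul_of_nonneg_left hnorm hc_pos.le
    calc gseq d lam α g n y z ≤ g y u + c * ‖u - z‖ ^ α := step
      _ ≤ g y' u + ε + c * (‖u - z'‖ ^ α + ‖z - z'‖ ^ α) := by linarith
      _ = g y' u + c * ‖u - z'‖ ^ α + ε + c * ‖z - z'‖ ^ α := by ring
  -- continuity via ε-δ
  rw [Metric.continuous_iff]
  rintro ⟨y₀, z₀⟩ ε hε
  obtain ⟨δ₁, hδ₁, hδ⟩ := hy_unif y₀ (ε / 4) (by linarith)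
  set δ₂ : ℝ := (ε / (4 * c)) ^ (1 / α) with hδ₂def
  have hδ₂ : 0 < δ₂ := Real.rpow_pos_of_pos (by positivity) _
  have hδ₂pow : c * δ₂ ^ α = ε / 4 := by
    rw [hδ₂def, ← Real.rpow_mul (by positivity : (0:ℝ) ≤ ε / (4 * c)), one_div,
      inv_mul_cancel₀ (ne_of_gt hα0), Real.rpow_one]
    field_simp
  refine ⟨min δ₁ δ₂, lt_min hδ₁ hδ₂, ?_⟩
  rintro ⟨y, z⟩ hdist
  rw [Prod.dist_eq, max_lt_iff] at hdist
  have hy : |y - y₀| < δ₁ := lt_of_lt_of_le (by simpa [Real.dist_eq] using hdist.1) (min_le_left _ _)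
  have hz : ‖z - z₀‖ < δ₂ := lt_of_lt_of_le (by simpa [dist_eq_norm] using hdist.2) (min_le_right _ _)
  have hgy : ∀ u, |g y u - g y₀ u| ≤ ε / 4 := hδ y hy
  have hgy' : ∀ u, |g y₀ u - g y u| ≤ ε / 4 := fun u => by
    rw [abs_sub_comm]; exact hgy u
  have hpow : c * ‖z - z₀‖ ^ α ≤ ε / 4 := by
    rw [← hδ₂pow]
    exact mul_le_mul_of_nonneg_left
      (Real.rpow_le_rpow (norm_nonneg _) hz.le hα0.le) hc_pos.le
  have h1 := key y y₀ z z₀ (ε / 4) hgy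
  have h2 := key y₀ y z₀ z (ε / 4) hgy'
  rw [norm_sub_rev] at h2
  rw [Real.dist_eq, abs_lt]
  constructor <;> linarith
end

section
/- Assume in addition condition (H1) (pointwise form): g is continuous on ℝ × ℝ^d, and y ↦ g(y,z) is continuous uniformly in z, i.e. for every y₀ ∈ ℝ and ε > 0 there is δ > 0 such that |y − y₀| < δ implies |g(y,z) − g(y₀,z)| ≤ ε for every z ∈ ℝ^d. Then for any sequences (y_n) in ℝ and (z_n) in ℝ^d with y_n → y and z_n → z, one has g_n(y_n, z_n) → g(y,z) as n → ∞. -/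
open Filter Topology

/-- Subadditivity of `x ↦ x ^ p` on nonnegative reals for `0 ≤ p ≤ 1`. -/
lemma rpow_subadd_s5 {a b p : ℝ} (ha : 0 ≤ a) (hb : 0 ≤ b) (hp : 0 ≤ p) (hp1 : p ≤ 1) :
    (a + b) ^ p ≤ a ^ p + b ^ p := by
  have h := NNReal.rpow_add_le_add_rpow a.toNNReal b.toNNReal hp hp1
  have h2 := NNReal.coe_le_coe.2 h
  rw [NNReal.coe_add, NNReal.coe_rpow, NNReal.coe_rpow, NNReal.coe_rpow, NNReal.coe_add,
    Real.coe_toNNReal a ha, Real.coe_toNNReal b hb] at h2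
  exact h2

/-- Under (H1) (joint continuity of `g` and continuity in `y` uniform in `z`)
and (H4), if `y_n → y` and `z_n → z` then `g_n(y_n, z_n) → g(y,z)`. -/
theorem stmt_5 (d : ℕ) (hd : 1 ≤ d) (lam α f : ℝ) (hlam : 0 < lam)
    (hα : 0 < α ∧ α < 1) (hf : 0 ≤ f)
    (g : ℝ → EuclideanSpace ℝ (Fin d) → ℝ)
    (H4 : ∀ (y : ℝ) (z : EuclideanSpace ℝ (Fin d)),
      |g y z - g y 0| ≤ lam * (f + |y| + ‖z‖ ^ α))
    (hg_cont : Continuous (fun p : ℝ × EuclideanSpace ℝ (Fin d) => g p.1 p.2))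
    (hy_unif : ∀ (y₀ : ℝ) (ε : ℝ), 0 < ε → ∃ δ > 0, ∀ y : ℝ, |y - y₀| < δ →
      ∀ z : EuclideanSpace ℝ (Fin d), |g y z - g y₀ z| ≤ ε)
    (yseq : ℕ → ℝ) (zseq : ℕ → EuclideanSpace ℝ (Fin d))
    (y : ℝ) (z : EuclideanSpace ℝ (Fin d))
    (hyseq : Tendsto yseq atTop (𝓝 y)) (hzseq : Tendsto zseq atTop (𝓝 z)) :
    Tendsto (fun n : ℕ => gseq d lam α g n (yseq n) (zseq n)) atTop (𝓝 (g y z)) := by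
  obtain ⟨hα0, hα1⟩ := hα
  rw [Metric.tendsto_atTop]
  intro ε hε
  -- continuity of g along the sequence
  have hc : Tendsto (fun n => g (yseq n) (zseq n)) atTop (𝓝 (g y z)) :=
    (hg_cont.tendsto (y, z)).comp (hyseq.prodMk_nhds hzseq)
  have hc0 : Tendsto (fun n => g (yseq n) (0 : EuclideanSpace ℝ (Fin d))) atTop
      (𝓝 (g y 0)) :=
    (hg_cont.tendsto (y, 0)).comp (hyseq.prodMk_nhds tendsto_const_nhds)
  -- joint continuity at (y,z)
  obtain ⟨δ, hδ, hδg⟩ := Metric.continuousAt_iff.mp (hg_cont.continuousAt (x := (y, z)))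
    (ε / 2) (by positivity)
  have hcpos : (0 : ℝ) < (δ / 2) ^ α := Real.rpow_pos_of_pos (by linarith) α
  -- eventual facts
  have Ey : ∀ᶠ n in atTop, |yseq n - y| < min δ 1 := by
    have := Metric.tendsto_atTop.mp hyseq (min δ 1) (by positivity)
    obtain ⟨N, hN⟩ := this
    filter_upwards [eventually_ge_atTop N] with n hn
    simpa [Real.dist_eq] using hN n hn
  have Ez : ∀ᶠ n in atTop, ‖zseq n - z‖ < min (δ / 2) 1 := by
    have := Metric.tendsto_atTop.mp hzseq (min (δ / 2) 1) (by positivity)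
    obtain ⟨N, hN⟩ := this
    filter_upwards [eventually_ge_atTop N] with n hn
    simpa [dist_eq_norm] using hN n hn
  have E4 : ∀ᶠ n in atTop, g y 0 - 1 < g (yseq n) 0 := by
    have := Metric.tendsto_atTop.mp hc0 1 one_pos
    obtain ⟨N, hN⟩ := this
    filter_upwards [eventually_ge_atTop N] with n hn
    have := hN n hn
    rw [Real.dist_eq, abs_lt] at this
    linarith [this.1]
  have E5 : ∀ᶠ n : ℕ in atTop,
      g y z ≤ (g y 0 - 1 - lam * (f + (|y| + 1) + (‖z‖ + 1) ^ α)) + (n : ℝ) * (δ / 2) ^ α := by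
    have h' : Tendsto (fun n : ℕ =>
        (g y 0 - 1 - lam * (f + (|y| + 1) + (‖z‖ + 1) ^ α)) + (n : ℝ) * (δ / 2) ^ α)
        atTop atTop :=
      tendsto_atTop_add_const_left _ _ (tendsto_natCast_atTop_atTop.atTop_mul_const hcpos)
    exact h'.eventually_ge_atTop (g y z)
  have E1 : ∀ᶠ n in atTop, dist (g (yseq n) (zseq n)) (g y z) < ε / 2 := by
    have := Metric.tendsto_atTop.mp hc (ε / 2) (by positivity)
    obtain ⟨N, hN⟩ := this
    filter_upwards [eventually_ge_atTop N] with n hn using hN n hn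
  rw [← eventually_atTop]
  filter_upwards [Ey, Ez, E4, E5, E1] with n h1 h2 h3 h4 h5
  -- lower bound for all u
  have hlow : ∀ u : EuclideanSpace ℝ (Fin d),
      g y z - ε / 2 ≤ g (yseq n) u + ((n : ℝ) + lam) * ‖u - zseq n‖ ^ α := by
    intro u
    rcases lt_or_ge ‖u - zseq n‖ (δ / 2) with h | h
    · -- near case: use joint continuity
      have hdist : dist ((yseq n, u) : ℝ × EuclideanSpace ℝ (Fin d)) (y, z) < δ := by
        rw [Prod.dist_eq]
        apply max_lt
        · rw [Real.dist_eq]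
          exact lt_of_lt_of_le h1 (min_le_left _ _)
        · rw [dist_eq_norm]
          have htri : ‖u - z‖ ≤ ‖u - zseq n‖ + ‖zseq n - z‖ := by
            have := dist_triangle u (zseq n) z
            simpa [dist_eq_norm] using this
          have h2' : ‖zseq n - z‖ < δ / 2 := lt_of_lt_of_le h2 (min_le_left _ _)
          linarith
      have hcont := hδg hdist
      simp only [Real.dist_eq] at hcont
      have hg' := (abs_lt.mp hcont).1
      have hnn : 0 ≤ ((n : ℝ) + lam) * ‖u - zseq n‖ ^ α :=
        mul_nonneg (by positivity) (Real.rpow_nonneg (norm_nonneg _) α)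
      linarith
    · -- far case: use (H4) growth bound
      have hH := (abs_le.mp (H4 (yseq n) u)).1
      have hnorm : ‖u‖ ≤ ‖u - zseq n‖ + ‖zseq n‖ := by
        simpa using norm_add_le (u - zseq n) (zseq n)
      have hpow : ‖u‖ ^ α ≤ ‖u - zseq n‖ ^ α + ‖zseq n‖ ^ α :=
        le_trans (Real.rpow_le_rpow (norm_nonneg _) hnorm hα0.le)
          (rpow_subadd_s5 (norm_nonneg _) (norm_nonneg _) hα0.le hα1.le)
      have hz : ‖zseq n‖ ≤ ‖z‖ + 1 := by
        have htri : ‖zseq n‖ ≤ ‖zseq n - z‖ + ‖z‖ := by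
          simpa using norm_add_le (zseq n - z) z
        have h2' : ‖zseq n - z‖ < 1 := lt_of_lt_of_le h2 (min_le_right _ _)
        linarith
      have hzpow : ‖zseq n‖ ^ α ≤ (‖z‖ + 1) ^ α :=
        Real.rpow_le_rpow (norm_nonneg _) hz hα0.le
      have hy : |yseq n| ≤ |y| + 1 := by
        have htri : |yseq n| ≤ |yseq n - y| + |y| := by
          simpa using abs_add_le (yseq n - y) y
        have h1' : |yseq n - y| < 1 := lt_of_lt_of_le h1 (min_le_right _ _)
        linarith
      have hmul : lam * (f + |yseq n| + ‖u‖ ^ α) ≤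
          lam * (f + (|y| + 1) + (‖z‖ + 1) ^ α) + lam * ‖u - zseq n‖ ^ α := by
        have h' : f + |yseq n| + ‖u‖ ^ α ≤
            (f + (|y| + 1) + (‖z‖ + 1) ^ α) + ‖u - zseq n‖ ^ α := by linarith
        calc lam * (f + |yseq n| + ‖u‖ ^ α)
            ≤ lam * ((f + (|y| + 1) + (‖z‖ + 1) ^ α) + ‖u - zseq n‖ ^ α) :=
              mul_le_mul_of_nonneg_left h' hlam.le
          _ = _ := by ring
      have hfar : (n : ℝ) * (δ / 2) ^ α ≤ (n : ℝ) * ‖u - zseq n‖ ^ α :=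
        mul_le_mul_of_nonneg_left (Real.rpow_le_rpow (by positivity) h hα0.le)
          (Nat.cast_nonneg n)
      have hring : ((n : ℝ) + lam) * ‖u - zseq n‖ ^ α =
          (n : ℝ) * ‖u - zseq n‖ ^ α + lam * ‖u - zseq n‖ ^ α := by ring
      linarith
  -- the infimum is bounded below and its value at u = zseq n gives an upper bound
  have hbdd : BddBelow (Set.range fun u : EuclideanSpace ℝ (Fin d) =>
      g (yseq n) u + ((n : ℝ) + lam) * ‖u - zseq n‖ ^ α) := by
    refine ⟨g y z - ε / 2, ?_⟩
    rintro _ ⟨u, rfl⟩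
    exact hlow u
  have hub : gseq d lam α g n (yseq n) (zseq n) ≤ g (yseq n) (zseq n) := by
    have := ciInf_le hbdd (zseq n)
    simpa [gseq, sub_self, norm_zero, Real.zero_rpow hα0.ne'] using this
  have hlb : g y z - ε / 2 ≤ gseq d lam α g n (yseq n) (zseq n) := le_ciInf hlow
  rw [Real.dist_eq, abs_lt]
  rw [Real.dist_eq] at h5
  have h5' := abs_lt.mp h5
  constructor <;> linarith [h5'.1, h5'.2]
end

section
/- For every integer n ≥ 1 and every (y,z) ∈ ℝ × ℝ^d: the defining set of g_n(y,z) is bounded below, −f − C·(|y| + ‖z‖^α) ≤ g_n(y,z) ≤ g_{n+1}(y,z), and |g_n(y,z)| ≤ f + C·(|y| + ‖z‖^α); if moreover g satisfies part (i) of condition (H1a), then also g_n(y,z) ≤ g(y,z) for all (y,z). -/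
/-!
Write `ρ(y,z;u,v) = |y - u| + ‖z - v‖^α`. Since `t ↦ t^α` is subadditive for `α ≤ 1`,
`|u| + ‖v‖^α ≤ |y| + ‖z‖^α + ρ`, so (H5) bounds every term `g(u,v) + nCρ` of the infimum from
below by `-f - C(|y| + ‖z‖^α)`. For the upper bounds, rational points with `u ≤ y` accumulate at
`(y,z)` and `ρ → 0` there, so `g_n(y,z)` is at most the limit along `{u ≤ y}` of any majorant of
`g`: the growth bound of (H5), or `g` itself under (H1a)(i).
-/

open Filter Topology

/-- The embedding of a rational vector into `ℝ^d` (with the Euclidean norm). -/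
noncomputable def qcast (d : ℕ) (v : Fin d → ℚ) : EuclideanSpace ℝ (Fin d) :=
  (WithLp.equiv 2 (Fin d → ℝ)).symm fun i => (v i : ℝ)

/-- The rational inf-convolution
`g_n(y,z) := inf_{(u,v) ∈ ℚ × ℚ^d} ( g(u,v) + n·C·(|y − u| + ‖z − v‖^α) )`. -/
noncomputable def gq (d : ℕ) (C α : ℝ) (g : ℝ → EuclideanSpace ℝ (Fin d) → ℝ)
    (n : ℕ) (y : ℝ) (z : EuclideanSpace ℝ (Fin d)) : ℝ :=
  ⨅ p : ℚ × (Fin d → ℚ),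
    (g (p.1 : ℝ) (qcast d p.2) + (n : ℝ) * C * (|y - (p.1 : ℝ)| + ‖z - qcast d p.2‖ ^ α))

open Set

theorem ciInf_le_of_frequently_of_tendsto {ι X : Type*} {φ : ι → X} {F : X → ℝ}
    {l : Filter X} {L : ℝ} (hbdd : BddBelow (range fun i => F (φ i)))
    (hφ : ∃ᶠ x in l, x ∈ range φ) (hF : Tendsto F l (𝓝 L)) :
    ⨅ i, F (φ i) ≤ L := by
  refine le_of_forall_pos_lt_add fun ε hε => ?_
  obtain ⟨_, ⟨i, rfl⟩, hi⟩ :=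
    (hφ.and_eventually (hF.eventually (gt_mem_nhds (lt_add_of_pos_right L hε)))).exists
  exact (ciInf_le hbdd i).trans_lt hi

theorem denseRange_qcast (d : ℕ) : DenseRange (qcast d) :=
  (WithLp.equiv 2 (Fin d → ℝ)).symm.surjective.denseRange.comp
    (DenseRange.piMap fun _ => Rat.denseRange_cast) (PiLp.continuous_toLp 2 _)

theorem frequently_ratPoint_nhdsWithin_le (d : ℕ) (y : ℝ) (z : EuclideanSpace ℝ (Fin d)) :
    ∃ᶠ p in 𝓝[{p : ℝ × EuclideanSpace ℝ (Fin d) | p.1 ≤ y}] (y, z),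
      p ∈ range fun q : ℚ × (Fin d → ℚ) => ((q.1 : ℝ), qcast d q.2) := by
  have hdense := (Rat.denseRange_cast (𝕜 := ℝ)).prodMap (denseRange_qcast d)
  have hopen : IsOpen {p : ℝ × EuclideanSpace ℝ (Fin d) | p.1 < y} :=
    isOpen_lt continuous_fst continuous_const
  have hmem : (y, z) ∈ closure {p : ℝ × EuclideanSpace ℝ (Fin d) | p.1 < y} :=
    map_mem_closure (f := fun t : ℝ => (t, z)) (s := Iio y) (by fun_prop)
      (by rw [closure_Iio]; exact self_mem_Iic) fun _ h => h
  have hclosure := closure_minimal (hdense.open_subset_closure_inter hopen) isClosed_closure hmem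
  rw [mem_closure_iff_frequently] at hclosure
  rw [frequently_nhdsWithin_iff]
  exact hclosure.mono fun p hp => ⟨hp.2, (show p.1 < y from hp.1).le⟩

section Penalty

variable {E : Type*} [SeminormedAddCommGroup E] {α : ℝ}

theorem abs_add_rpow_norm_le_add (hα₀ : 0 ≤ α) (hα₁ : α ≤ 1) (y u : ℝ) (z v : E) :
    |u| + ‖v‖ ^ α ≤ (|y| + ‖z‖ ^ α) + (|y - u| + ‖z - v‖ ^ α) := by
  have hu : |u| ≤ |y| + |y - u| := by simpa using abs_sub y (y - u)
  have hv : ‖v‖ ≤ ‖z‖ + ‖z - v‖ := by simpa using norm_sub_le z (z - v)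
  have hvα : ‖v‖ ^ α ≤ ‖z‖ ^ α + ‖z - v‖ ^ α :=
    (Real.rpow_le_rpow (norm_nonneg _) hv hα₀).trans
      (Real.rpow_add_le_add_rpow (norm_nonneg _) (norm_nonneg _) hα₀ hα₁)
  linarith

theorem neg_growth_le_add_penalty {g : ℝ → E → ℝ} {C f m : ℝ} (hC : 0 ≤ C) (hα₀ : 0 ≤ α)
    (hα₁ : α ≤ 1) (H5 : ∀ y z, |g y z| ≤ f + C * (|y| + ‖z‖ ^ α)) (hm : 1 ≤ m)
    (y u : ℝ) (z v : E) :
    -f - C * (|y| + ‖z‖ ^ α) ≤ g u v + m * C * (|y - u| + ‖z - v‖ ^ α) := by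
  have hg := neg_le_of_abs_le (H5 u v)
  have hρ : 0 ≤ |y - u| + ‖z - v‖ ^ α := by positivity
  have := mul_le_mul_of_nonneg_left (abs_add_rpow_norm_le_add hα₀ hα₁ y u z v) hC
  nlinarith [mul_nonneg hC hρ]

theorem tendsto_add_penalty (hα : 0 < α) {h : ℝ × E → ℝ} {l : Filter (ℝ × E)} {y L c : ℝ}
    {z : E} (hl : l ≤ 𝓝 (y, z)) (hh : Tendsto h l (𝓝 L)) :
    Tendsto (fun p => h p + c * (|y - p.1| + ‖z - p.2‖ ^ α)) l (𝓝 L) := by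
  have hρ : Tendsto (fun p : ℝ × E => |y - p.1| + ‖z - p.2‖ ^ α) (𝓝 (y, z)) (𝓝 0) := by
    have : Continuous fun p : ℝ × E => |y - p.1| + ‖z - p.2‖ ^ α := by
      fun_prop (disch := exact hα.le)
    simpa [Real.zero_rpow hα.ne'] using this.tendsto (y, z)
  simpa using hh.add ((hρ.mono_left hl).const_mul c)

end Penalty

section RationalInfConvolution

variable {d : ℕ} {C α : ℝ} {g : ℝ → EuclideanSpace ℝ (Fin d) → ℝ} {n : ℕ} {y : ℝ}
  {z : EuclideanSpace ℝ (Fin d)}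

theorem gq_le_gq_succ (hC : 0 ≤ C) (hbdd : BddBelow (range fun p : ℚ × (Fin d → ℚ) =>
      g (p.1 : ℝ) (qcast d p.2) + (n : ℝ) * C * (|y - (p.1 : ℝ)| + ‖z - qcast d p.2‖ ^ α))) :
    gq d C α g n y z ≤ gq d C α g (n + 1) y z := by
  refine ciInf_mono hbdd fun p => ?_
  gcongr
  linarith

theorem gq_le_of_tendsto (hα : 0 < α) {h : ℝ × EuclideanSpace ℝ (Fin d) → ℝ} {L : ℝ}
    (hgh : ∀ u v, g u v ≤ h (u, v)) (hbdd : BddBelow (range fun p : ℚ × (Fin d → ℚ) =>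
      g (p.1 : ℝ) (qcast d p.2) + (n : ℝ) * C * (|y - (p.1 : ℝ)| + ‖z - qcast d p.2‖ ^ α)))
    (hh : Tendsto h (𝓝[{p | p.1 ≤ y}] (y, z)) (𝓝 L)) : gq d C α g n y z ≤ L := by
  set H := fun p : ℝ × EuclideanSpace ℝ (Fin d) => h p + n * C * (|y - p.1| + ‖z - p.2‖ ^ α)
  have hle : ∀ p : ℚ × (Fin d → ℚ), g p.1 (qcast d p.2) + n * C * (|y - p.1| +
      ‖z - qcast d p.2‖ ^ α) ≤ H (p.1, qcast d p.2) := fun p => by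
    simp only [H]; linarith [hgh p.1 (qcast d p.2)]
  obtain ⟨b, hb⟩ := hbdd
  calc gq d C α g n y z ≤ ⨅ p : ℚ × (Fin d → ℚ), H (p.1, qcast d p.2) := ciInf_mono ⟨b, hb⟩ hle
    _ ≤ L := ciInf_le_of_frequently_of_tendsto
      ⟨b, forall_mem_range.2 fun p => (hb (mem_range_self p)).trans (hle p)⟩
      (frequently_ratPoint_nhdsWithin_le d y z)
      (tendsto_add_penalty hα nhdsWithin_le_nhds hh)

end RationalInfConvolution

theorem stmt_8_general (d : ℕ) (C α f : ℝ) (hC : 0 < C)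
    (hα : 0 < α ∧ α < 1)
    (g : ℝ → EuclideanSpace ℝ (Fin d) → ℝ)
    (H5 : ∀ (y : ℝ) (z : EuclideanSpace ℝ (Fin d)),
      |g y z| ≤ f + C * (|y| + ‖z‖ ^ α))
    (n : ℕ) (hn : 1 ≤ n) (y : ℝ) (z : EuclideanSpace ℝ (Fin d)) :
    BddBelow (Set.range fun p : ℚ × (Fin d → ℚ) =>
      g (p.1 : ℝ) (qcast d p.2) +
        (n : ℝ) * C * (|y - (p.1 : ℝ)| + ‖z - qcast d p.2‖ ^ α)) ∧
    -f - C * (|y| + ‖z‖ ^ α) ≤ gq d C α g n y z ∧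
    gq d C α g n y z ≤ gq d C α g (n + 1) y z ∧
    |gq d C α g n y z| ≤ f + C * (|y| + ‖z‖ ^ α) ∧
    ((∀ (y₀ : ℝ) (z₀ : EuclideanSpace ℝ (Fin d)),
        Tendsto (fun p : ℝ × EuclideanSpace ℝ (Fin d) => g p.1 p.2)
          (𝓝[{p : ℝ × EuclideanSpace ℝ (Fin d) | p.1 ≤ y₀}] (y₀, z₀)) (𝓝 (g y₀ z₀))) →
      gq d C α g n y z ≤ g y z) := by
  have hlow : ∀ p : ℚ × (Fin d → ℚ), -f - C * (|y| + ‖z‖ ^ α) ≤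
      g p.1 (qcast d p.2) + n * C * (|y - p.1| + ‖z - qcast d p.2‖ ^ α) := fun p =>
    neg_growth_le_add_penalty hC.le hα.1.le hα.2.le H5 (by exact_mod_cast hn) _ _ _ _
  have hbdd : BddBelow (range fun p : ℚ × (Fin d → ℚ) =>
      g p.1 (qcast d p.2) + n * C * (|y - p.1| + ‖z - qcast d p.2‖ ^ α)) :=
    ⟨_, forall_mem_range.2 hlow⟩
  have hgrowth : Continuous fun p : ℝ × EuclideanSpace ℝ (Fin d) =>
      f + C * (|p.1| + ‖p.2‖ ^ α) := by
    fun_prop (disch := exact hα.1.le)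
  have hup : gq d C α g n y z ≤ f + C * (|y| + ‖z‖ ^ α) :=
    gq_le_of_tendsto hα.1 (fun u v => (le_abs_self _).trans (H5 u v)) hbdd
      ((hgrowth.tendsto (y, z)).mono_left nhdsWithin_le_nhds)
  have hgq_low : -f - C * (|y| + ‖z‖ ^ α) ≤ gq d C α g n y z := le_ciInf hlow
  exact ⟨hbdd, hgq_low, gq_le_gq_succ hC.le hbdd, abs_le.2 ⟨by linarith, hup⟩,
    fun H1a => gq_le_of_tendsto hα.1 (fun _ _ => le_rfl) hbdd (H1a y z)⟩

/-- For every `n ≥ 1` and `(y,z)`: the defining set of `g_n(y,z)` is bounded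
below, `−f − C·(|y| + ‖z‖^α) ≤ g_n(y,z) ≤ g_{n+1}(y,z)`, and
`|g_n(y,z)| ≤ f + C·(|y| + ‖z‖^α)`; moreover if `g` satisfies part (i) of (H1a)
(left-continuity in `y`, jointly with `z`), then also `g_n(y,z) ≤ g(y,z)`. -/
theorem stmt_8 (d : ℕ) (hd : 1 ≤ d) (C α f : ℝ) (hC : 0 < C)
    (hα : 0 < α ∧ α < 1) (hf : 0 ≤ f)
    (g : ℝ → EuclideanSpace ℝ (Fin d) → ℝ)
    (H5 : ∀ (y : ℝ) (z : EuclideanSpace ℝ (Fin d)),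
      |g y z| ≤ f + C * (|y| + ‖z‖ ^ α))
    (n : ℕ) (hn : 1 ≤ n) (y : ℝ) (z : EuclideanSpace ℝ (Fin d)) :
    BddBelow (Set.range fun p : ℚ × (Fin d → ℚ) =>
      g (p.1 : ℝ) (qcast d p.2) +
        (n : ℝ) * C * (|y - (p.1 : ℝ)| + ‖z - qcast d p.2‖ ^ α)) ∧
    -f - C * (|y| + ‖z‖ ^ α) ≤ gq d C α g n y z ∧
    gq d C α g n y z ≤ gq d C α g (n + 1) y z ∧
    |gq d C α g n y z| ≤ f + C * (|y| + ‖z‖ ^ α) ∧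
    ((∀ (y₀ : ℝ) (z₀ : EuclideanSpace ℝ (Fin d)),
        Tendsto (fun p : ℝ × EuclideanSpace ℝ (Fin d) => g p.1 p.2)
          (𝓝[{p : ℝ × EuclideanSpace ℝ (Fin d) | p.1 ≤ y₀}] (y₀, z₀)) (𝓝 (g y₀ z₀))) →
      gq d C α g n y z ≤ g y z) :=
  stmt_8_general d C α f hC hα g H5 n hn y z
end

section
/- Assume g satisfies condition (H1a). Let (y_n) be a sequence in ℝ with y_n ≤ y₀ for all n and y_n → y₀, and let (z_n) be a sequence in ℝ^d with z_n → z₀. Then g_n(y_n, z_n) → g(y₀, z₀) as n → ∞. -/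
/-!
Upper bound: approximate `(y_n, z_n)` from the left by rational points `p_n` with
`n · (|y_n − u_n| + ‖z_n − v_n‖^α) → 0`; then `g_n(y_n, z_n) ≤ g(p_n) + o(1)`, and
`g(p_n) → g(y₀, z₀)` by (H1a)(i), since `u_n ≤ y₀`.

Lower bound: (H1a) together with the local lower bound from (H5) makes `g` lower
semicontinuous. In the infimum, points with penalty below `η` lie near `(y₀, z₀)`, where
`g > g(y₀, z₀) − ε`; by (H5) and the subadditivity of `t ↦ t^α` every other term is at least
`−B + (n − 1) C η → ∞`, with `B` bounded along the sequence.
-/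

open Filter Topology

theorem lowerSemicontinuousAt_of_tendsto_of_le_liminf {X : Type*} [TopologicalSpace X]
    {G : X → ℝ} {x₀ : X} {s t : Set X} (hst : s ∪ t = Set.univ)
    (hs : Tendsto G (𝓝[s] x₀) (𝓝 (G x₀))) (ht : G x₀ ≤ liminf G (𝓝[t] x₀))
    (hbdd : IsBoundedUnder (· ≥ ·) (𝓝 x₀) G) : LowerSemicontinuousAt G x₀ := by
  intro a ha
  rw [← nhdsWithin_univ, ← hst, nhdsWithin_union, eventually_sup]
  exact ⟨hs.eventually (eventually_gt_nhds ha),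
    eventually_lt_of_lt_liminf (ha.trans_le ht) (hbdd.mono nhdsWithin_le_nhds)⟩

theorem eventually_le_add_mul_penalty {X : Type*} [PseudoMetricSpace X] {G B : X → ℝ}
    {ψ : X → X → ℝ} {c a : ℝ} {x₀ : X} {x : ℕ → X} (hc : 0 < c) (hψ : ∀ x p, 0 ≤ ψ x p)
    (hψdist : ∀ δ > 0, ∃ η > 0, ∀ x p, ψ x p < η → dist p x < δ)
    (hG : ∀ x p, -B x - c * ψ x p ≤ G p) (hB : ContinuousAt B x₀)
    (hlsc : LowerSemicontinuousAt G x₀) (hx : Tendsto x atTop (𝓝 x₀)) (ha : a < G x₀) :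
    ∀ᶠ n : ℕ in atTop, ∀ p, a ≤ G p + n * c * ψ (x n) p := by
  obtain ⟨δ, hδ, hGa⟩ := Metric.eventually_nhds_iff.1 (hlsc a ha)
  obtain ⟨η, hη, hdist⟩ := hψdist (δ / 2) (half_pos hδ)
  have hcost : Tendsto (fun n : ℕ => ((n : ℝ) + -1) * (c * η)) atTop atTop :=
    (tendsto_atTop_add_const_right _ _ tendsto_natCast_atTop_atTop).atTop_mul_const
      (mul_pos hc hη)
  filter_upwards [hx (Metric.ball_mem_nhds _ (half_pos hδ)),
    (hB.tendsto.comp hx).eventually (eventually_lt_nhds (lt_add_one (B x₀))),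
    hcost.eventually_ge_atTop (a + (B x₀ + 1)), eventually_ge_atTop 1]
    with n hxn hBn hcostn hn p
  have hn : (1 : ℝ) ≤ n := by exact_mod_cast hn
  have hGp := hG (x n) p
  have hψp := hψ (x n) p
  by_cases hp : ψ (x n) p < η
  · have hclose : dist p x₀ < δ := by
      linarith [dist_triangle p (x n) x₀, hdist _ _ hp, Metric.mem_ball.1 hxn]
    have : 0 ≤ n * c * ψ (x n) p := by positivity
    linarith [hGa hclose]
  · have : ((n : ℝ) + -1) * (c * η) ≤ ((n : ℝ) - 1) * c * ψ (x n) p := by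
      rw [mul_assoc]
      exact mul_le_mul (by linarith) (by nlinarith) (by positivity) (by linarith)
    simp only [Function.comp_apply] at hBn
    nlinarith

section Penalty

variable {E : Type*} [SeminormedAddCommGroup E] {α : ℝ}

noncomputable def penalty (α : ℝ) (x p : ℝ × E) : ℝ := |x.1 - p.1| + ‖x.2 - p.2‖ ^ α

lemma penalty_nonneg (x p : ℝ × E) : 0 ≤ penalty α x p :=
  add_nonneg (abs_nonneg _) (Real.rpow_nonneg (norm_nonneg _) _)

lemma continuous_penalty (hα : 0 ≤ α) (x : ℝ × E) : Continuous (penalty α x) := by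
  unfold penalty
  fun_prop (disch := exact fun _ => Or.inr hα)

lemma dist_lt_of_penalty_lt (hα : 0 < α) {δ : ℝ} (hδ : 0 < δ) {x p : ℝ × E}
    (h : penalty α x p < min δ (δ ^ α)) : dist p x < δ := by
  rw [lt_min_iff, penalty] at h
  have h₁ : |x.1 - p.1| < δ := by linarith [Real.rpow_nonneg (norm_nonneg (x.2 - p.2)) α]
  have h₂ : ‖x.2 - p.2‖ < δ := by
    rw [← Real.rpow_lt_rpow_iff (norm_nonneg _) hδ.le hα]
    linarith [abs_nonneg (x.1 - p.1)]
  rw [Prod.dist_eq, max_lt_iff, Real.dist_eq, dist_eq_norm, abs_sub_comm, norm_sub_rev]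
  exact ⟨h₁, h₂⟩

lemma tendsto_of_tendsto_penalty (hα : 0 < α) {ι : Type*} {l : Filter ι} {x p : ι → ℝ × E}
    {x₀ : ℝ × E} (hx : Tendsto x l (𝓝 x₀))
    (h : Tendsto (fun i => penalty α (x i) (p i)) l (𝓝 0)) : Tendsto p l (𝓝 x₀) := by
  have hpx : Tendsto (fun i => dist (p i) (x i)) l (𝓝 0) := by
    refine Metric.tendsto_nhds.2 fun δ hδ => ?_
    filter_upwards [h.eventually (eventually_lt_nhds (lt_min hδ (Real.rpow_pos_of_pos hδ α)))]
      with i hi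
    rw [Real.dist_0_eq_abs, abs_of_nonneg dist_nonneg]
    exact dist_lt_of_penalty_lt hα hδ hi
  refine tendsto_iff_dist_tendsto_zero.2 (squeeze_zero (fun _ => dist_nonneg)
    (fun i => dist_triangle _ (x i) _) ?_)
  simpa using hpx.add (tendsto_iff_dist_tendsto_zero.1 hx)

lemma abs_add_norm_rpow_le_add_penalty (hα₀ : 0 ≤ α) (hα₁ : α ≤ 1) (x p : ℝ × E) :
    |p.1| + ‖p.2‖ ^ α ≤ |x.1| + ‖x.2‖ ^ α + penalty α x p := by
  have h₁ : |p.1| ≤ |x.1| + |x.1 - p.1| := by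
    linarith [abs_sub_abs_le_abs_sub p.1 x.1, abs_sub_comm p.1 x.1]
  have h₂ : ‖p.2‖ ^ α ≤ ‖x.2‖ ^ α + ‖x.2 - p.2‖ ^ α :=
    calc ‖p.2‖ ^ α ≤ (‖x.2‖ + ‖x.2 - p.2‖) ^ α :=
          Real.rpow_le_rpow (norm_nonneg _)
            ((norm_le_insert' p.2 x.2).trans_eq (by rw [norm_sub_rev])) hα₀
      _ ≤ ‖x.2‖ ^ α + ‖x.2 - p.2‖ ^ α :=
          Real.rpow_add_le_add_rpow (norm_nonneg _) (norm_nonneg _) hα₀ hα₁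
  unfold penalty
  linarith

noncomputable def growthBound (f C α : ℝ) (x : ℝ × E) : ℝ := f + C * (|x.1| + ‖x.2‖ ^ α)

variable {f C : ℝ} {g : ℝ → E → ℝ}

lemma continuous_growthBound (hα : 0 ≤ α) : Continuous (growthBound (E := E) f C α) :=
  continuous_const.add <| continuous_const.mul <|
    continuous_fst.abs.add (continuous_snd.norm.rpow_const fun _ => Or.inr hα)

lemma isBoundedUnder_ge_uncurry (hα : 0 ≤ α) (H5 : ∀ y z, |g y z| ≤ f + C * (|y| + ‖z‖ ^ α))
    (x₀ : ℝ × E) : IsBoundedUnder (· ≥ ·) (𝓝 x₀) (Function.uncurry g) :=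
  (continuous_growthBound hα).continuousAt.tendsto.neg.isBoundedUnder_ge.mono_ge
    (Eventually.of_forall fun p => neg_le_of_abs_le (H5 p.1 p.2))

lemma neg_growthBound_sub_mul_penalty_le (hC : 0 ≤ C) (hα₀ : 0 ≤ α) (hα₁ : α ≤ 1)
    (H5 : ∀ y z, |g y z| ≤ f + C * (|y| + ‖z‖ ^ α)) (x p : ℝ × E) :
    -growthBound f C α x - C * penalty α x p ≤ Function.uncurry g p := by
  show _ ≤ g p.1 p.2
  unfold growthBound
  nlinarith [neg_le_of_abs_le (H5 p.1 p.2), abs_add_norm_rpow_le_add_penalty hα₀ hα₁ x p]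

lemma eventually_le_uncurry_add_mul_penalty (hC : 0 < C) (hα₀ : 0 < α) (hα₁ : α ≤ 1)
    (H5 : ∀ y z, |g y z| ≤ f + C * (|y| + ‖z‖ ^ α)) {x₀ : ℝ × E} {x : ℕ → ℝ × E} {a : ℝ}
    (hlsc : LowerSemicontinuousAt (Function.uncurry g) x₀) (hx : Tendsto x atTop (𝓝 x₀))
    (ha : a < Function.uncurry g x₀) :
    ∀ᶠ n : ℕ in atTop, ∀ p, a ≤ Function.uncurry g p + n * C * penalty α (x n) p :=
  eventually_le_add_mul_penalty hC penalty_nonneg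
    (fun _ hδ => ⟨_, lt_min hδ (Real.rpow_pos_of_pos hδ α),
      fun _ _ => dist_lt_of_penalty_lt hα₀ hδ⟩)
    (neg_growthBound_sub_mul_penalty_le hC.le hα₀.le hα₁ H5)
    (continuous_growthBound hα₀.le).continuousAt hlsc hx ha

end Penalty

noncomputable def ratPoint (d : ℕ) : ℚ × (Fin d → ℚ) → ℝ × EuclideanSpace ℝ (Fin d) :=
  Prod.map (↑) (qcast d)

lemma denseRange_ratPoint (d : ℕ) : DenseRange (ratPoint d) :=
  Rat.denseRange_cast.prodMap <| (WithLp.equiv 2 (Fin d → ℝ)).symm.surjective.denseRange.comp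
    (DenseRange.piMap fun _ => Rat.denseRange_cast) (PiLp.continuous_toLp 2 _)

lemma exists_ratPoint_le_penalty_lt (d : ℕ) {α : ℝ} (hα : 0 < α)
    (x : ℝ × EuclideanSpace ℝ (Fin d)) {ε : ℝ} (hε : 0 < ε) :
    ∃ p, (ratPoint d p).1 ≤ x.1 ∧ penalty α x (ratPoint d p) < ε := by
  have hopen : IsOpen ({q | q.1 < x.1} ∩ {q | penalty α x q < ε}) :=
    (isOpen_lt continuous_fst continuous_const).inter
      (isOpen_lt (continuous_penalty hα.le x) continuous_const)
  have hne : (x.1 - ε / 2, x.2) ∈ {q | q.1 < x.1} ∩ {q | penalty α x q < ε} := by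
    simp [penalty, Real.zero_rpow hα.ne', abs_of_pos (half_pos hε), hε]
  obtain ⟨p, hp₁, hp₂⟩ := (denseRange_ratPoint d).exists_mem_open hopen ⟨_, hne⟩
  exact ⟨p, le_of_lt hp₁, hp₂⟩

lemma exists_seq_ratPoint_tendsto (d : ℕ) {α : ℝ} (hα : 0 < α)
    {x : ℕ → ℝ × EuclideanSpace ℝ (Fin d)} {x₀ : ℝ × EuclideanSpace ℝ (Fin d)}
    (hx : Tendsto x atTop (𝓝 x₀)) :
    ∃ p : ℕ → ℚ × (Fin d → ℚ), (∀ n, (ratPoint d (p n)).1 ≤ (x n).1) ∧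
      Tendsto (fun n => ratPoint d (p n)) atTop (𝓝 x₀) ∧
      Tendsto (fun n : ℕ => n * penalty α (x n) (ratPoint d (p n))) atTop (𝓝 0) := by
  choose p hp_le hp_pen using fun n : ℕ =>
    exists_ratPoint_le_penalty_lt d hα (x n) (pow_pos (Nat.one_div_pos_of_nat (n := n)) 2)
  have hpen_nonneg n := penalty_nonneg (α := α) (x n) (ratPoint d (p n))
  have hpen_le : ∀ n : ℕ,
      ((n : ℝ) + 1) * penalty α (x n) (ratPoint d (p n)) ≤ 1 / ((n : ℝ) + 1) := fun n => by
    have h := (mul_lt_mul_of_pos_left (hp_pen n) (Nat.cast_add_one_pos n)).le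
    rwa [div_pow, one_pow, ← div_eq_mul_one_div, sq, div_mul_cancel_left₀ (by positivity),
      ← one_div] at h
  have hpen : Tendsto (fun n : ℕ => penalty α (x n) (ratPoint d (p n))) atTop (𝓝 0) :=
    squeeze_zero hpen_nonneg (fun n => (le_mul_of_one_le_left (hpen_nonneg n) (by simp)).trans
      (hpen_le n)) tendsto_one_div_add_atTop_nhds_zero_nat
  refine ⟨p, hp_le, tendsto_of_tendsto_penalty hα hx hpen, squeeze_zero
    (fun n => mul_nonneg n.cast_nonneg (hpen_nonneg n)) (fun n => ?_)
    tendsto_one_div_add_atTop_nhds_zero_nat⟩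
  nlinarith [hpen_le n, hpen_nonneg n]

theorem stmt_10_general (d : ℕ) (C α f : ℝ) (hC : 0 < C)
    (hα : 0 < α ∧ α < 1)
    (g : ℝ → EuclideanSpace ℝ (Fin d) → ℝ)
    (H5 : ∀ (y : ℝ) (z : EuclideanSpace ℝ (Fin d)),
      |g y z| ≤ f + C * (|y| + ‖z‖ ^ α))
    (H1a_i : ∀ (y₀ : ℝ) (z₀ : EuclideanSpace ℝ (Fin d)),
      Tendsto (fun p : ℝ × EuclideanSpace ℝ (Fin d) => g p.1 p.2)
        (𝓝[{p : ℝ × EuclideanSpace ℝ (Fin d) | p.1 ≤ y₀}] (y₀, z₀)) (𝓝 (g y₀ z₀)))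
    (H1a_ii : ∀ (y₀ : ℝ) (z₀ : EuclideanSpace ℝ (Fin d)),
      g y₀ z₀ ≤ Filter.liminf (fun p : ℝ × EuclideanSpace ℝ (Fin d) => g p.1 p.2)
        (𝓝[{p : ℝ × EuclideanSpace ℝ (Fin d) | y₀ ≤ p.1}] (y₀, z₀)))
    (yseq : ℕ → ℝ) (zseq : ℕ → EuclideanSpace ℝ (Fin d))
    (y₀ : ℝ) (z₀ : EuclideanSpace ℝ (Fin d))
    (hyle : ∀ n, yseq n ≤ y₀)
    (hyseq : Tendsto yseq atTop (𝓝 y₀)) (hzseq : Tendsto zseq atTop (𝓝 z₀)) :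
    Tendsto (fun n : ℕ => gq d C α g n (yseq n) (zseq n)) atTop (𝓝 (g y₀ z₀)) := by
  obtain ⟨hα₀, hα₁⟩ := hα
  set x : ℕ → ℝ × EuclideanSpace ℝ (Fin d) := fun n => (yseq n, zseq n)
  have hx : Tendsto x atTop (𝓝 (y₀, z₀)) := hyseq.prodMk_nhds hzseq
  have hlsc : LowerSemicontinuousAt (Function.uncurry g) (y₀, z₀) :=
    lowerSemicontinuousAt_of_tendsto_of_le_liminf (Set.ext fun p => by simp [le_total])
      (H1a_i y₀ z₀) (H1a_ii y₀ z₀) (isBoundedUnder_ge_uncurry hα₀.le H5 _)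
  have hlower : ∀ a < g y₀ z₀, ∀ᶠ n : ℕ in atTop, ∀ p, a ≤
      Function.uncurry g (ratPoint d p) + n * C * penalty α (x n) (ratPoint d p) := fun a ha =>
    (eventually_le_uncurry_add_mul_penalty hC hα₀ hα₁.le H5 hlsc hx ha).mono fun _ hn _ => hn _
  obtain ⟨p, hp_le, hp_lim, hp_cost⟩ := exists_seq_ratPoint_tendsto d hα₀ hx
  have hupper : Tendsto (fun n : ℕ => Function.uncurry g (ratPoint d (p n)) +
      n * C * penalty α (x n) (ratPoint d (p n))) atTop (𝓝 (g y₀ z₀)) := by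
    have h := ((H1a_i y₀ z₀).comp (tendsto_nhdsWithin_iff.2
      ⟨hp_lim, Eventually.of_forall fun n => (hp_le n).trans (hyle n)⟩)).add
        ((hp_cost.mul_const C).congr fun n => mul_right_comm _ _ _)
    rwa [zero_mul, add_zero] at h
  refine tendsto_order.2 ⟨fun a ha => ?_, fun b hb => ?_⟩
  · obtain ⟨a', haa', ha'⟩ := exists_between ha
    exact (hlower a' ha').mono fun n hn => haa'.trans_le (le_ciInf hn)
  · filter_upwards [hupper.eventually (eventually_lt_nhds hb), hlower _ (sub_one_lt _)]
      with n hn hbdd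
    exact (ciInf_le ⟨_, Set.forall_mem_range.2 hbdd⟩ (p n)).trans_lt hn

/-- Assume (H5) and (H1a). If `y_n ≤ y₀` for all `n`, `y_n → y₀` and
`z_n → z₀`, then `g_n(y_n, z_n) → g(y₀, z₀)` as `n → ∞`. -/
theorem stmt_10 (d : ℕ) (hd : 1 ≤ d) (C α f : ℝ) (hC : 0 < C)
    (hα : 0 < α ∧ α < 1) (hf : 0 ≤ f)
    (g : ℝ → EuclideanSpace ℝ (Fin d) → ℝ)
    (H5 : ∀ (y : ℝ) (z : EuclideanSpace ℝ (Fin d)),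
      |g y z| ≤ f + C * (|y| + ‖z‖ ^ α))
    (H1a_i : ∀ (y₀ : ℝ) (z₀ : EuclideanSpace ℝ (Fin d)),
      Tendsto (fun p : ℝ × EuclideanSpace ℝ (Fin d) => g p.1 p.2)
        (𝓝[{p : ℝ × EuclideanSpace ℝ (Fin d) | p.1 ≤ y₀}] (y₀, z₀)) (𝓝 (g y₀ z₀)))
    (H1a_ii : ∀ (y₀ : ℝ) (z₀ : EuclideanSpace ℝ (Fin d)),
      g y₀ z₀ ≤ Filter.liminf (fun p : ℝ × EuclideanSpace ℝ (Fin d) => g p.1 p.2)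
        (𝓝[{p : ℝ × EuclideanSpace ℝ (Fin d) | y₀ ≤ p.1}] (y₀, z₀)))
    (yseq : ℕ → ℝ) (zseq : ℕ → EuclideanSpace ℝ (Fin d))
    (y₀ : ℝ) (z₀ : EuclideanSpace ℝ (Fin d))
    (hyle : ∀ n, yseq n ≤ y₀)
    (hyseq : Tendsto yseq atTop (𝓝 y₀)) (hzseq : Tendsto zseq atTop (𝓝 z₀)) :
    Tendsto (fun n : ℕ => gq d C α g n (yseq n) (zseq n)) atTop (𝓝 (g y₀ z₀)) :=
  stmt_10_general d C α f hC hα g H5 H1a_i H1a_ii yseq zseq y₀ z₀ hyle hyseq hzseq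
end

section
/- Suppose that for each z ∈ ℝ^d the map y ↦ g(y,z) is nondecreasing and left-continuous, and for each y ∈ ℝ the map z ↦ g(y,z) is continuous. Then g satisfies condition (H1a) at every point: for every (y₀,z₀) ∈ ℝ × ℝ^d, (i) g(y,z) tends to g(y₀,z₀) as (y,z) → (y₀,z₀) with y ≤ y₀, and (ii) the liminf of g(y,z) as (y,z) → (y₀,z₀) with y ≥ y₀ is ≥ g(y₀,z₀). -/
open Filter Topology

/-!
Monotonicity in `y` lets a single slice `g y₁ ·` control `g` on the whole half-space `y > y₁`.
Left-continuity picks `y₁ < y₀` with `g y₁ z₀` close to `g y₀ z₀`, and continuity of `g y₁` in `z`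
then makes `g` lower semicontinuous at `(y₀, z₀)`. From the left, `g y z ≤ g y₀ z` bounds `g` from
above, which gives continuity within `y ≤ y₀`; from the right only lower semicontinuity survives,
which is the `liminf` inequality. That `liminf` is a genuine one (not the junk value of an
unbounded real `liminf`) because `g ≤ g y₂ ·` near `(y₀, z₀)` for any `y₂ > y₀`.
-/

open Function Set

theorem LowerSemicontinuousAt.le_liminf_of_le_nhds {X γ : Type*} [TopologicalSpace X]
    [ConditionallyCompleteLinearOrder γ] [DenselyOrdered γ] {f : X → γ} {x : X} {l : Filter X}
    [NeBot l] (hf : LowerSemicontinuousAt f x) (hl : l ≤ 𝓝 x)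
    (hbdd : l.IsBoundedUnder (· ≤ ·) f) : f x ≤ liminf f l :=
  le_of_forall_lt_imp_le_of_dense fun _ hc =>
    le_liminf_of_le hbdd.isCoboundedUnder_ge (Eventually.mono (hl (hf _ hc)) fun _ => le_of_lt)

section Monotone

variable {α β γ : Type*} [TopologicalSpace α] [TopologicalSpace β] {g : α → β → γ}
  {y₀ : α} {z₀ : β}

theorem lowerSemicontinuousAt_uncurry_of_monotone [LinearOrder α] [OrderTopology α]
    [DenselyOrdered α] [NoMinOrder α] [Preorder γ] (hmono : ∀ z, Monotone (g · z))
    (hleft : LowerSemicontinuousWithinAt (g · z₀) (Iic y₀) y₀)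
    (hz : ∀ y, LowerSemicontinuousAt (g y) z₀) :
    LowerSemicontinuousAt (uncurry g) (y₀, z₀) := by
  intro a ha
  obtain ⟨y₁, hay₁, hy₁⟩ : ∃ y₁, a < g y₁ z₀ ∧ y₁ < y₀ :=
    ((hleft a ha).filter_mono (nhdsWithin_mono _ Iio_subset_Iic_self) |>.and
      self_mem_nhdsWithin).exists
  filter_upwards [(eventually_gt_nhds hy₁).prod_nhds (hz y₁ a hay₁)] with p ⟨hp₁, hp₂⟩
  exact hp₂.trans_le (hmono p.2 (le_of_lt hp₁))

theorem upperSemicontinuousWithinAt_uncurry_of_monotone [Preorder α] [Preorder γ]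
    (hmono : ∀ z, Monotone (g · z)) (hz : UpperSemicontinuousAt (g y₀) z₀) :
    UpperSemicontinuousWithinAt (uncurry g) {p | p.1 ≤ y₀} (y₀, z₀) := by
  intro b hb
  filter_upwards [nhdsWithin_le_nhds ((continuous_snd.tendsto (y₀, z₀)).eventually (hz b hb)),
    self_mem_nhdsWithin] with p hp hp₁
  exact (hmono p.2 hp₁).trans_lt hp

theorem isBoundedUnder_le_uncurry_of_monotone [LinearOrder α] [OrderClosedTopology α]
    [NoMaxOrder α] [Preorder γ] (hmono : ∀ z, Monotone (g · z))
    (hz : ∀ y, (𝓝 z₀).IsBoundedUnder (· ≤ ·) (g y)) :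
    (𝓝 (y₀, z₀)).IsBoundedUnder (· ≤ ·) (uncurry g) := by
  obtain ⟨y₂, hy₂⟩ := exists_gt y₀
  obtain ⟨b, hb⟩ := hz y₂
  refine ⟨b, eventually_map.2 ?_⟩
  filter_upwards [(eventually_lt_nhds hy₂).prod_nhds hb] with p ⟨hp₁, hp₂⟩
  exact (hmono p.2 (le_of_lt hp₁)).trans hp₂

end Monotone

theorem stmt_12_general (d : ℕ)
    (g : ℝ → EuclideanSpace ℝ (Fin d) → ℝ)
    (hmono : ∀ z : EuclideanSpace ℝ (Fin d), Monotone fun y => g y z)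
    (hleft : ∀ (z : EuclideanSpace ℝ (Fin d)) (y₀ : ℝ),
      ContinuousWithinAt (fun y => g y z) (Set.Iic y₀) y₀)
    (hcontz : ∀ y : ℝ, Continuous fun z : EuclideanSpace ℝ (Fin d) => g y z)
    (y₀ : ℝ) (z₀ : EuclideanSpace ℝ (Fin d)) :
    Tendsto (fun p : ℝ × EuclideanSpace ℝ (Fin d) => g p.1 p.2)
      (𝓝[{p : ℝ × EuclideanSpace ℝ (Fin d) | p.1 ≤ y₀}] (y₀, z₀)) (𝓝 (g y₀ z₀)) ∧
    g y₀ z₀ ≤ Filter.liminf (fun p : ℝ × EuclideanSpace ℝ (Fin d) => g p.1 p.2)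
      (𝓝[{p : ℝ × EuclideanSpace ℝ (Fin d) | y₀ ≤ p.1}] (y₀, z₀)) := by
  have hlsc : LowerSemicontinuousAt (uncurry g) (y₀, z₀) :=
    lowerSemicontinuousAt_uncurry_of_monotone hmono (hleft z₀ y₀).lowerSemicontinuousWithinAt
      fun y => (hcontz y).lowerSemicontinuous z₀
  have husc : UpperSemicontinuousWithinAt (uncurry g) {p | p.1 ≤ y₀} (y₀, z₀) :=
    upperSemicontinuousWithinAt_uncurry_of_monotone hmono ((hcontz y₀).upperSemicontinuous z₀)
  have hbdd : (𝓝 (y₀, z₀)).IsBoundedUnder (· ≤ ·) (uncurry g) :=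
    isBoundedUnder_le_uncurry_of_monotone hmono fun y => ((hcontz y).tendsto z₀).isBoundedUnder_le
  have : NeBot (𝓝[{p : ℝ × EuclideanSpace ℝ (Fin d) | y₀ ≤ p.1}] (y₀, z₀)) :=
    nhdsWithin_neBot_of_mem (le_refl y₀)
  exact ⟨continuousWithinAt_iff_lower_upperSemicontinuousWithinAt.2
      ⟨hlsc.lowerSemicontinuousWithinAt _, husc⟩,
    hlsc.le_liminf_of_le_nhds nhdsWithin_le_nhds (hbdd.mono nhdsWithin_le_nhds)⟩

/-- If for each `z` the map `y ↦ g(y,z)` is nondecreasing and left-continuous,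
and for each `y` the map `z ↦ g(y,z)` is continuous, then `g` satisfies (H1a) at every point:
(i) `g(y,z) → g(y₀,z₀)` as `(y,z) → (y₀,z₀)` with `y ≤ y₀`, and
(ii) `liminf_{(y,z) → (y₀,z₀), y ≥ y₀} g(y,z) ≥ g(y₀,z₀)`. -/
theorem stmt_12 (d : ℕ) (hd : 1 ≤ d)
    (g : ℝ → EuclideanSpace ℝ (Fin d) → ℝ)
    (hmono : ∀ z : EuclideanSpace ℝ (Fin d), Monotone fun y => g y z)
    (hleft : ∀ (z : EuclideanSpace ℝ (Fin d)) (y₀ : ℝ),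
      ContinuousWithinAt (fun y => g y z) (Set.Iic y₀) y₀)
    (hcontz : ∀ y : ℝ, Continuous fun z : EuclideanSpace ℝ (Fin d) => g y z)
    (y₀ : ℝ) (z₀ : EuclideanSpace ℝ (Fin d)) :
    Tendsto (fun p : ℝ × EuclideanSpace ℝ (Fin d) => g p.1 p.2)
      (𝓝[{p : ℝ × EuclideanSpace ℝ (Fin d) | p.1 ≤ y₀}] (y₀, z₀)) (𝓝 (g y₀ z₀)) ∧
    g y₀ z₀ ≤ Filter.liminf (fun p : ℝ × EuclideanSpace ℝ (Fin d) => g p.1 p.2)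
      (𝓝[{p : ℝ × EuclideanSpace ℝ (Fin d) | y₀ ≤ p.1}] (y₀, z₀)) :=
  stmt_12_general d g hmono hleft hcontz y₀ z₀
end
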